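/- Let f be a geometric mapping whose deformation relation is L̄^i_{jk} = L^i_{jk} + ω̄^i_{jk} − ω^i_{jk} as in the context. Then, for all indices m,n and at every point of ℝ^N, (N+1)((ζ̄^{(s)}_{mn} − ζ̄^{(s)}_{nm}) − (ζ^{(s)}_{mn} − ζ^{(s)}_{nm})) = −R̄_{[mn]} + D̄^α_{αmn} − D̄^α_{αnm} + R_{[mn]} − D^α_{αmn} + D^α_{αnm}, where R_{jm} = R^α_{jmα}, R_{[mn]} = R_{mn} − R_{nm}, and similarly for barred objects. -/

import Mathlib

open scoped BigOperators

namespace PaperInv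

variable {N : ℕ}

/-- Partial derivative in the `k`-th coordinate direction. -/
noncomputable def pd (k : Fin N) (f : (Fin N → ℝ) → ℝ) (x : Fin N → ℝ) : ℝ :=
  fderiv ℝ f x (Pi.single k 1)

/-- Kronecker delta. -/
noncomputable def kd (i j : Fin N) : ℝ := if i = j then 1 else 0

/-- Curvature tensor of a symmetric affine connection `L`. -/
noncomputable def curv (L : Fin N → Fin N → Fin N → (Fin N → ℝ) → ℝ)
    (i j m n : Fin N) (x : Fin N → ℝ) : ℝ :=
  pd n (L i j m) x - pd m (L i j n) x
    + (∑ α, L α j m x * L i α n x) - (∑ α, L α j n x * L i α m x)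

/-- Ricci contraction `R_{jm} = R^α_{jmα}`. -/
noncomputable def ricci (L : Fin N → Fin N → Fin N → (Fin N → ℝ) → ℝ)
    (j m : Fin N) (x : Fin N → ℝ) : ℝ :=
  ∑ α, curv L α j m α x

/-- Covariant derivative of a 1-form with respect to `L`. -/
noncomputable def cov1 (L : Fin N → Fin N → Fin N → (Fin N → ℝ) → ℝ)
    (ρ : Fin N → (Fin N → ℝ) → ℝ) (i j : Fin N) (x : Fin N → ℝ) : ℝ :=
  pd j (ρ i) x - ∑ α, L α i j x * ρ α x

/-- Covariant derivative of a type (1,2) tensor with respect to `L`. -/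
noncomputable def cov12 (L : Fin N → Fin N → Fin N → (Fin N → ℝ) → ℝ)
    (a : Fin N → Fin N → Fin N → (Fin N → ℝ) → ℝ)
    (i j m n : Fin N) (x : Fin N → ℝ) : ℝ :=
  pd n (a i j m) x + (∑ α, L i α n x * a α j m x)
    - (∑ α, L α j n x * a i α m x) - (∑ α, L α m n x * a i j α x)

/-- The deformation object
`ω^i_{jk} = s₁(δ^i_jρ_k + δ^i_kρ_j) + s₂(F^i_jσ_k + F^i_kσ_j) + s₃σ_{jk}φ^i`. -/
noncomputable def omg (s1 s2 s3 : ℝ) (ρ σ : Fin N → (Fin N → ℝ) → ℝ)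
    (F : Fin N → Fin N → (Fin N → ℝ) → ℝ)
    (σ2 : Fin N → Fin N → (Fin N → ℝ) → ℝ)
    (φ : Fin N → (Fin N → ℝ) → ℝ) (i j k : Fin N) (x : Fin N → ℝ) : ℝ :=
  s1 * (kd i j * ρ k x + kd i k * ρ j x)
    + s2 * (F i j x * σ k x + F i k x * σ j x) + s3 * σ2 j k x * φ i x

/-- The object `ζ^{(s)}_{ij}`. -/
noncomputable def zeta (L : Fin N → Fin N → Fin N → (Fin N → ℝ) → ℝ)
    (s1 s2 s3 : ℝ) (ρ σ : Fin N → (Fin N → ℝ) → ℝ)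
    (F : Fin N → Fin N → (Fin N → ℝ) → ℝ)
    (σ2 : Fin N → Fin N → (Fin N → ℝ) → ℝ)
    (φ : Fin N → (Fin N → ℝ) → ℝ) (i j : Fin N) (x : Fin N → ℝ) : ℝ :=
  s1 * cov1 L ρ i j x + s1 ^ 2 * ρ i x * ρ j x
    + s1 * s2 * (∑ α, (F α i x * σ j x + F α j x * σ i x) * ρ α x)
    + s1 * s3 * σ2 i j x * (∑ α, ρ α x * φ α x)

/-- The object `D̃^{(s₂)(s₃)i}_{jmn}`. -/
noncomputable def Dt (L : Fin N → Fin N → Fin N → (Fin N → ℝ) → ℝ)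
    (s2 s3 : ℝ) (σ : Fin N → (Fin N → ℝ) → ℝ)
    (F : Fin N → Fin N → (Fin N → ℝ) → ℝ)
    (σ2 : Fin N → Fin N → (Fin N → ℝ) → ℝ)
    (φ : Fin N → (Fin N → ℝ) → ℝ) (i j m n : Fin N) (x : Fin N → ℝ) : ℝ :=
  s2 ^ 2 * (F i n x * (∑ α, (F α m x * σ j x + F α j x * σ m x) * σ α x)
      + (∑ α, F i α x * F α m x) * σ j x * σ n x)
    + s3 ^ 2 * σ2 j m x * (∑ α, σ2 α n x * φ α x) * φ i x
    + s2 * s3 * ((∑ α, (F α m x * σ j x + F α j x * σ m x) * σ2 α n x) * φ i x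
      - (∑ α, (F i m x * σ α x + F i α x * σ m x) * φ α x) * σ2 j n x)
    - s2 * cov12 L (fun i j m x => F i j x * σ m x + F i m x * σ j x) i j m n x
    - s3 * cov12 L (fun i j m x => σ2 j m x * φ i x) i j m n x

/-- The Thomas projective parameter of `L`. -/
noncomputable def thomas (L : Fin N → Fin N → Fin N → (Fin N → ℝ) → ℝ)
    (i j k : Fin N) (x : Fin N → ℝ) : ℝ :=
  L i j k x - (1 / ((N : ℝ) + 1)) *
    (kd i k * (∑ α, L α j α x) + kd i j * (∑ α, L α k α x))

/-- The Weyl projective tensor of `L`. -/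
noncomputable def weyl (L : Fin N → Fin N → Fin N → (Fin N → ℝ) → ℝ)
    (i j m n : Fin N) (x : Fin N → ℝ) : ℝ :=
  curv L i j m n x + (1 / ((N : ℝ) + 1)) * kd i j * (ricci L m n x - ricci L n m x)
    + ((N : ℝ) / ((N : ℝ) ^ 2 - 1)) * (kd i m * ricci L j n x - kd i n * ricci L j m x)
    + (1 / ((N : ℝ) ^ 2 - 1)) * (kd i m * ricci L n j x - kd i n * ricci L m j x)

/-- The derived associated Thomas-type object `T̃^{(s)i}_{jk}`. -/
noncomputable def dThomas (L : Fin N → Fin N → Fin N → (Fin N → ℝ) → ℝ)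
    (s1 s2 s3 : ℝ) (σ : Fin N → (Fin N → ℝ) → ℝ)
    (F : Fin N → Fin N → (Fin N → ℝ) → ℝ)
    (σ2 : Fin N → Fin N → (Fin N → ℝ) → ℝ)
    (φ : Fin N → (Fin N → ℝ) → ℝ) (i j k : Fin N) (x : Fin N → ℝ) : ℝ :=
  L i j k x
    - (s1 / ((N : ℝ) + 1)) * kd i j * ((∑ α, L α k α x)
        - s2 * ((∑ α, F α k x * σ α x) + (∑ α, F α α x) * σ k x)
        - s3 * (∑ α, σ2 k α x * φ α x))
    - (s1 / ((N : ℝ) + 1)) * kd i k * ((∑ α, L α j α x)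
        - s2 * ((∑ α, F α j x * σ α x) + (∑ α, F α α x) * σ j x)
        - s3 * (∑ α, σ2 j α x * φ α x))
    - s2 * (F i j x * σ k x + F i k x * σ j x) - s3 * σ2 j k x * φ i x

/-- The derived associated Weyl-type object `W^{(s)i}_{jmn}`. -/
noncomputable def dWeyl (L : Fin N → Fin N → Fin N → (Fin N → ℝ) → ℝ)
    (s2 s3 : ℝ) (σ : Fin N → (Fin N → ℝ) → ℝ)
    (F : Fin N → Fin N → (Fin N → ℝ) → ℝ)
    (σ2 : Fin N → Fin N → (Fin N → ℝ) → ℝ)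
    (φ : Fin N → (Fin N → ℝ) → ℝ) (i j m n : Fin N) (x : Fin N → ℝ) : ℝ :=
  curv L i j m n x + (1 / ((N : ℝ) + 1)) * kd i j * (ricci L m n x - ricci L n m x)
    + ((N : ℝ) / ((N : ℝ) ^ 2 - 1)) * (kd i m * ricci L j n x - kd i n * ricci L j m x)
    + (1 / ((N : ℝ) ^ 2 - 1)) * (kd i m * ricci L n j x - kd i n * ricci L m j x)
    + Dt L s2 s3 σ F σ2 φ i j m n x - Dt L s2 s3 σ F σ2 φ i j n m x

/-- The object `W^{(s).[2].i}_{jmn}`. -/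
noncomputable def W2 (L : Fin N → Fin N → Fin N → (Fin N → ℝ) → ℝ)
    (s2 s3 : ℝ) (σ : Fin N → (Fin N → ℝ) → ℝ)
    (F : Fin N → Fin N → (Fin N → ℝ) → ℝ)
    (σ2 : Fin N → Fin N → (Fin N → ℝ) → ℝ)
    (φ : Fin N → (Fin N → ℝ) → ℝ) (i j m n : Fin N) (x : Fin N → ℝ) : ℝ :=
  dWeyl L s2 s3 σ F σ2 φ i j m n x
    + (1 / ((N : ℝ) - 1)) *
      (kd i m * ((∑ α, Dt L s2 s3 σ F σ2 φ α j n α x)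
          - (∑ α, Dt L s2 s3 σ F σ2 φ α j α n x))
        - kd i n * ((∑ α, Dt L s2 s3 σ F σ2 φ α j m α x)
          - (∑ α, Dt L s2 s3 σ F σ2 φ α j α m x)))


section AuxLemmas

variable {N : ℕ}

lemma pd_congr {f g : (Fin N → ℝ) → ℝ} (h : ∀ y, f y = g y) (k : Fin N) (x : Fin N → ℝ) :
    pd k f x = pd k g x := by rw [funext h]

lemma pd_add {f g : (Fin N → ℝ) → ℝ} (k : Fin N) (x : Fin N → ℝ)
    (hf : DifferentiableAt ℝ f x) (hg : DifferentiableAt ℝ g x) :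
    pd k (fun y => f y + g y) x = pd k f x + pd k g x := by
  simp [pd, fderiv_fun_add hf hg]

lemma pd_sub {f g : (Fin N → ℝ) → ℝ} (k : Fin N) (x : Fin N → ℝ)
    (hf : DifferentiableAt ℝ f x) (hg : DifferentiableAt ℝ g x) :
    pd k (fun y => f y - g y) x = pd k f x - pd k g x := by
  simp [pd, fderiv_fun_sub hf hg]

lemma pd_const_mul {f : (Fin N → ℝ) → ℝ} (c : ℝ) (k : Fin N) (x : Fin N → ℝ)
    (hf : DifferentiableAt ℝ f x) :
    pd k (fun y => c * f y) x = c * pd k f x := by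
  simp [pd, fderiv_const_mul hf c]

lemma pd_lin2 {h f1 f2 : (Fin N → ℝ) → ℝ} (c1 c2 : ℝ) (k : Fin N) (x : Fin N → ℝ)
    (hh : ∀ y, h y = c1 * f1 y + c2 * f2 y)
    (h1 : DifferentiableAt ℝ f1 x) (h2 : DifferentiableAt ℝ f2 x) :
    pd k h x = c1 * pd k f1 x + c2 * pd k f2 x := by
  rw [pd_congr hh k x, pd_add k x (h1.const_mul c1) (h2.const_mul c2),
    pd_const_mul c1 k x h1, pd_const_mul c2 k x h2]

lemma pd_lin3 {h f1 f2 f3 : (Fin N → ℝ) → ℝ} (c1 c2 c3 : ℝ) (k : Fin N) (x : Fin N → ℝ)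
    (hh : ∀ y, h y = c1 * f1 y + c2 * f2 y + c3 * f3 y)
    (h1 : DifferentiableAt ℝ f1 x) (h2 : DifferentiableAt ℝ f2 x)
    (h3 : DifferentiableAt ℝ f3 x) :
    pd k h x = c1 * pd k f1 x + c2 * pd k f2 x + c3 * pd k f3 x := by
  rw [pd_congr hh k x,
    pd_add (f := fun y => c1 * f1 y + c2 * f2 y) k x ((h1.const_mul c1).add (h2.const_mul c2)) (h3.const_mul c3),
    pd_add k x (h1.const_mul c1) (h2.const_mul c2),
    pd_const_mul c1 k x h1, pd_const_mul c2 k x h2, pd_const_mul c3 k x h3]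

lemma sum_swap_eq {f g : Fin N → Fin N → ℝ} (h : ∀ a b, f a b = g b a) :
    (∑ a, ∑ b, f a b) = ∑ a, ∑ b, g a b := by
  rw [Finset.sum_comm]
  exact Finset.sum_congr rfl fun a _ => Finset.sum_congr rfl fun b _ => h b a

lemma kd_self (i : Fin N) : kd i i = 1 := by simp [kd]

lemma zeta_antisym (L : Fin N → Fin N → Fin N → (Fin N → ℝ) → ℝ)
    (hLsym : ∀ i j k, L i j k = L i k j)
    (s1 s2 s3 : ℝ) (ρ σ φ : Fin N → (Fin N → ℝ) → ℝ)
    (F σ2 : Fin N → Fin N → (Fin N → ℝ) → ℝ)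
    (hσ2sym : ∀ j k, σ2 j k = σ2 k j) (m n : Fin N) (x : Fin N → ℝ) :
    zeta L s1 s2 s3 ρ σ F σ2 φ m n x - zeta L s1 s2 s3 ρ σ F σ2 φ n m x
      = s1 * (pd n (ρ m) x - pd m (ρ n) x) := by
  simp only [zeta, cov1]
  have h1 : (∑ α, L α n m x * ρ α x) = ∑ α, L α m n x * ρ α x :=
    Finset.sum_congr rfl fun α _ => by rw [hLsym α n m]
  have h2 : (∑ α, (F α n x * σ m x + F α m x * σ n x) * ρ α x)
      = ∑ α, (F α m x * σ n x + F α n x * σ m x) * ρ α x :=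
    Finset.sum_congr rfl fun α _ => by ring
  rw [h1, h2, hσ2sym n m]
  ring

lemma ricci_antisym (L : Fin N → Fin N → Fin N → (Fin N → ℝ) → ℝ)
    (hLsym : ∀ i j k, L i j k = L i k j) (m n : Fin N) (x : Fin N → ℝ) :
    ricci L m n x - ricci L n m x
      = (∑ α, pd m (L α n α) x) - ∑ α, pd n (L α m α) x := by
  simp only [ricci, curv]
  rw [← Finset.sum_sub_distrib]
  have step : ∀ α : Fin N,
      (pd α (L α m n) x - pd n (L α m α) x + (∑ β, L β m n x * L α β α x)
          - ∑ β, L β m α x * L α β n x)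
        - (pd α (L α n m) x - pd m (L α n α) x + (∑ β, L β n m x * L α β α x)
          - ∑ β, L β n α x * L α β m x)
      = (pd m (L α n α) x - pd n (L α m α) x)
        + ((∑ β, L β n α x * L α β m x) - ∑ β, L β m α x * L α β n x) := by
    intro α
    have e1 : (∑ β, L β n m x * L α β α x) = ∑ β, L β m n x * L α β α x :=
      Finset.sum_congr rfl fun β _ => by rw [hLsym β n m]
    rw [hLsym α n m, e1]
    ring
  rw [Finset.sum_congr rfl fun α _ => step α]
  rw [Finset.sum_add_distrib, Finset.sum_sub_distrib, Finset.sum_sub_distrib]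
  have hq : (∑ α, ∑ β, L β n α x * L α β m x) = ∑ α, ∑ β, L β m α x * L α β n x := by
    apply sum_swap_eq
    intro a b
    rw [hLsym b n a, hLsym a b m]
    ring
  rw [hq]
  ring

lemma cov12_trace (L a : Fin N → Fin N → Fin N → (Fin N → ℝ) → ℝ)
    (m n : Fin N) (x : Fin N → ℝ) :
    (∑ β, cov12 L a β β m n x)
      = (∑ β, pd n (a β β m) x) - ∑ β, ∑ α, L α m n x * a β β α x := by
  simp only [cov12]
  rw [Finset.sum_sub_distrib, Finset.sum_sub_distrib, Finset.sum_add_distrib]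
  have h : (∑ β, ∑ α, L β α n x * a α β m x) = ∑ β, ∑ α, L α β n x * a β α m x :=
    sum_swap_eq fun a b => rfl
  rw [h]
  ring

lemma dt_trace_antisym (L : Fin N → Fin N → Fin N → (Fin N → ℝ) → ℝ)
    (hLsym : ∀ i j k, L i j k = L i k j)
    (s2 s3 : ℝ) (σ φ : Fin N → (Fin N → ℝ) → ℝ)
    (F σ2 : Fin N → Fin N → (Fin N → ℝ) → ℝ)
    (m n : Fin N) (x : Fin N → ℝ) :
    (∑ β, Dt L s2 s3 σ F σ2 φ β β m n x) - (∑ β, Dt L s2 s3 σ F σ2 φ β β n m x)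
      = s2 * ((∑ β, pd m (fun y => F β β y * σ n y + F β n y * σ β y) x)
            - (∑ β, pd n (fun y => F β β y * σ m y + F β m y * σ β y) x))
        + s3 * ((∑ β, pd m (fun y => σ2 β n y * φ β y) x)
            - (∑ β, pd n (fun y => σ2 β m y * φ β y) x)) := by
  have key : ∀ u v : Fin N, (∑ β, Dt L s2 s3 σ F σ2 φ β β u v x)
      = (∑ β, (s2 ^ 2 * (F β v x * (∑ α, (F α u x * σ β x + F α β x * σ u x) * σ α x)
            + (∑ α, F β α x * F α u x) * σ β x * σ v x)
          + s3 ^ 2 * σ2 β u x * (∑ α, σ2 α v x * φ α x) * φ β x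
          + s2 * s3 * ((∑ α, (F α u x * σ β x + F α β x * σ u x) * σ2 α v x) * φ β x
            - (∑ α, (F β u x * σ α x + F β α x * σ u x) * φ α x) * σ2 β v x)))
        - s2 * ((∑ β, pd v (fun y => F β β y * σ u y + F β u y * σ β y) x)
            - ∑ β, ∑ α, L α u v x * (F β β x * σ α x + F β α x * σ β x))
        - s3 * ((∑ β, pd v (fun y => σ2 β u y * φ β y) x)
            - ∑ β, ∑ α, L α u v x * (σ2 β α x * φ β x)) := by
    intro u v
    simp only [Dt]
    rw [Finset.sum_sub_distrib, Finset.sum_sub_distrib, ← Finset.mul_sum, ← Finset.mul_sum,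
      cov12_trace, cov12_trace]
  have hLS2 : (∑ β, ∑ α : Fin N, L α n m x * (F β β x * σ α x + F β α x * σ β x))
      = ∑ β, ∑ α : Fin N, L α m n x * (F β β x * σ α x + F β α x * σ β x) :=
    Finset.sum_congr rfl fun β _ => Finset.sum_congr rfl fun α _ => by rw [hLsym α n m]
  have hLS3 : (∑ β, ∑ α : Fin N, L α n m x * (σ2 β α x * φ β x))
      = ∑ β, ∑ α : Fin N, L α m n x * (σ2 β α x * φ β x) :=
    Finset.sum_congr rfl fun β _ => Finset.sum_congr rfl fun α _ => by rw [hLsym α n m]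
  rw [key m n, key n m, hLS2, hLS3]
  simp only [Finset.mul_sum, Finset.sum_mul, add_mul, mul_add, sub_mul, mul_sub,
    Finset.sum_add_distrib, Finset.sum_sub_distrib]
  have w1 : (∑ a, ∑ b, s2 ^ 2 * F a n x * F b m x * σ a x * σ b x)
      = ∑ a, ∑ b, s2 ^ 2 * F a m x * F b n x * σ a x * σ b x :=
    sum_swap_eq fun a b => by ring
  have w2 : (∑ a, ∑ b, s3 ^ 2 * σ2 a m x * σ2 b n x * φ b x * φ a x)
      = ∑ a, ∑ b, s3 ^ 2 * σ2 a n x * σ2 b m x * φ b x * φ a x :=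
    sum_swap_eq fun a b => by ring
  have w3 : (∑ a, ∑ b, s2 ^ 2 * F a n x * F b a x * σ m x * σ b x)
      = ∑ a, ∑ b, s2 ^ 2 * F a b x * F b n x * σ a x * σ m x :=
    sum_swap_eq fun a b => by ring
  have w4 : (∑ a, ∑ b, s2 ^ 2 * F a b x * F b m x * σ a x * σ n x)
      = ∑ a, ∑ b, s2 ^ 2 * F a m x * F b a x * σ n x * σ b x :=
    sum_swap_eq fun a b => by ring
  have w5 : (∑ a, ∑ b, s2 * s3 * F b m x * σ a x * σ2 b n x * φ a x)
      = ∑ a, ∑ b, s2 * s3 * F a m x * σ b x * φ b x * σ2 a n x :=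
    sum_swap_eq fun a b => by ring
  have w6 : (∑ a, ∑ b, s2 * s3 * F b a x * σ m x * σ2 b n x * φ a x)
      = ∑ a, ∑ b, s2 * s3 * F a b x * σ m x * φ b x * σ2 a n x :=
    sum_swap_eq fun a b => by ring
  have w7 : (∑ a, ∑ b, s2 * s3 * F a n x * σ b x * φ b x * σ2 a m x)
      = ∑ a, ∑ b, s2 * s3 * F b n x * σ a x * σ2 b m x * φ a x :=
    sum_swap_eq fun a b => by ring
  have w8 : (∑ a, ∑ b, s2 * s3 * F a b x * σ n x * φ b x * σ2 a m x)
      = ∑ a, ∑ b, s2 * s3 * F b a x * σ n x * σ2 b m x * φ a x :=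
    sum_swap_eq fun a b => by ring
  ring_nf at w1 w2 w3 w4 w5 w6 w7 w8 ⊢
  have w9 : (∑ a, ∑ b, s2 ^ 2 * σ m x * F a n x * F b a x * σ b x)
      = ∑ a, ∑ b, s2 ^ 2 * F a n x * F b a x * σ m x * σ b x :=
    Finset.sum_congr rfl fun a _ => Finset.sum_congr rfl fun b _ => by ring
  have w10 : (∑ a, ∑ b, s2 ^ 2 * σ n x * F a b x * F b m x * σ a x)
      = ∑ a, ∑ b, s2 ^ 2 * F a b x * F b m x * σ a x * σ n x :=
    Finset.sum_congr rfl fun a _ => Finset.sum_congr rfl fun b _ => by ring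
  linear_combination w1 + w2 + w3 + w4 + w5 + w6 + w7 + w8 + w9 + w10

lemma omg_differentiableAt (s1 s2 s3 : ℝ) (ρ σ φ : Fin N → (Fin N → ℝ) → ℝ)
    (F σ2 : Fin N → Fin N → (Fin N → ℝ) → ℝ)
    (hρ : ∀ j, ContDiff ℝ (⊤ : ℕ∞) (ρ j)) (hσ : ∀ j, ContDiff ℝ (⊤ : ℕ∞) (σ j))
    (hφ : ∀ j, ContDiff ℝ (⊤ : ℕ∞) (φ j))
    (hF : ∀ i j, ContDiff ℝ (⊤ : ℕ∞) (F i j)) (hσ2 : ∀ i j, ContDiff ℝ (⊤ : ℕ∞) (σ2 i j))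
    (i j k : Fin N) (x : Fin N → ℝ) :
    DifferentiableAt ℝ (fun y => omg s1 s2 s3 ρ σ F σ2 φ i j k y) x := by
  simp only [omg]
  have d1 : Differentiable ℝ (fun y => s1 * (kd i j * ρ k y + kd i k * ρ j y)) :=
    ((((hρ k).differentiable (by simp)).const_mul (kd i j)).add
      (((hρ j).differentiable (by simp)).const_mul (kd i k))).const_mul s1
  have d2 : Differentiable ℝ (fun y => s2 * (F i j y * σ k y + F i k y * σ j y)) :=
    ((((hF i j).mul (hσ k)).add ((hF i k).mul (hσ j))).differentiable (by simp)).const_mul s2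
  have d3 : Differentiable ℝ (fun y => s3 * σ2 j k y * φ i y) :=
    ((((hσ2 j k).differentiable (by simp)).const_mul s3).mul ((hφ i).differentiable (by simp)))
  exact ((d1.add d2).add d3).differentiableAt

lemma pd_omg (s1 s2 s3 : ℝ) (ρ σ φ : Fin N → (Fin N → ℝ) → ℝ)
    (F σ2 : Fin N → Fin N → (Fin N → ℝ) → ℝ)
    (hρ : ∀ j, ContDiff ℝ (⊤ : ℕ∞) (ρ j)) (hσ : ∀ j, ContDiff ℝ (⊤ : ℕ∞) (σ j))
    (hφ : ∀ j, ContDiff ℝ (⊤ : ℕ∞) (φ j))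
    (hF : ∀ i j, ContDiff ℝ (⊤ : ℕ∞) (F i j)) (hσ2 : ∀ i j, ContDiff ℝ (⊤ : ℕ∞) (σ2 i j))
    (i j k n : Fin N) (x : Fin N → ℝ) :
    pd n (fun y => omg s1 s2 s3 ρ σ F σ2 φ i j k y) x
      = s1 * (kd i j * pd n (ρ k) x + kd i k * pd n (ρ j) x)
        + s2 * pd n (fun y => F i j y * σ k y + F i k y * σ j y) x
        + s3 * pd n (fun y => σ2 j k y * φ i y) x := by
  have dρ : ∀ t, DifferentiableAt ℝ (ρ t) x :=
    fun t => ((hρ t).differentiable (by simp)).differentiableAt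
  have d1 : DifferentiableAt ℝ (fun y => kd i j * ρ k y + kd i k * ρ j y) x :=
    ((dρ k).const_mul _).add ((dρ j).const_mul _)
  have d2 : DifferentiableAt ℝ (fun y => F i j y * σ k y + F i k y * σ j y) x :=
    ((((hF i j).mul (hσ k)).add ((hF i k).mul (hσ j))).differentiable (by simp)).differentiableAt
  have d3 : DifferentiableAt ℝ (fun y => σ2 j k y * φ i y) x :=
    (((hσ2 j k).mul (hφ i)).differentiable (by simp)).differentiableAt
  rw [pd_lin3 s1 s2 s3 n x (fun y => by simp only [omg]; ring) d1 d2 d3,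
    pd_lin2 (kd i j) (kd i k) n x (fun y => rfl) (dρ k) (dρ j)]

lemma sum_pd_omg (s1 s2 s3 : ℝ) (ρ σ φ : Fin N → (Fin N → ℝ) → ℝ)
    (F σ2 : Fin N → Fin N → (Fin N → ℝ) → ℝ)
    (hρ : ∀ j, ContDiff ℝ (⊤ : ℕ∞) (ρ j)) (hσ : ∀ j, ContDiff ℝ (⊤ : ℕ∞) (σ j))
    (hφ : ∀ j, ContDiff ℝ (⊤ : ℕ∞) (φ j))
    (hF : ∀ i j, ContDiff ℝ (⊤ : ℕ∞) (F i j)) (hσ2 : ∀ i j, ContDiff ℝ (⊤ : ℕ∞) (σ2 i j))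
    (hσ2sym : ∀ j k, σ2 j k = σ2 k j)
    (u v : Fin N) (x : Fin N → ℝ) :
    (∑ α, pd u (fun y => omg s1 s2 s3 ρ σ F σ2 φ α v α y) x)
      = s1 * ((N : ℝ) + 1) * pd u (ρ v) x
        + s2 * (∑ α, pd u (fun y => F α α y * σ v y + F α v y * σ α y) x)
        + s3 * (∑ α, pd u (fun y => σ2 α v y * φ α y) x) := by
  have e : ∀ α : Fin N, pd u (fun y => omg s1 s2 s3 ρ σ F σ2 φ α v α y) x
      = s1 * (kd α v * pd u (ρ α) x + 1 * pd u (ρ v) x)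
        + s2 * pd u (fun y => F α α y * σ v y + F α v y * σ α y) x
        + s3 * pd u (fun y => σ2 α v y * φ α y) x := by
    intro α
    have e2 : pd u (fun y => F α v y * σ α y + F α α y * σ v y) x
        = pd u (fun y => F α α y * σ v y + F α v y * σ α y) x :=
      pd_congr (fun y => by ring) u x
    have e3 : pd u (fun y => σ2 v α y * φ α y) x
        = pd u (fun y => σ2 α v y * φ α y) x :=
      pd_congr (fun y => by rw [hσ2sym v α]) u x
    rw [pd_omg s1 s2 s3 ρ σ φ F σ2 hρ hσ hφ hF hσ2 α v α u x, e2, e3, kd_self]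
  rw [Finset.sum_congr rfl fun α _ => e α]
  rw [Finset.sum_add_distrib, Finset.sum_add_distrib,
    ← Finset.mul_sum, ← Finset.mul_sum, ← Finset.mul_sum]
  have e4 : (∑ α : Fin N, (kd α v * pd u (ρ α) x + 1 * pd u (ρ v) x))
      = ((N : ℝ) + 1) * pd u (ρ v) x := by
    rw [Finset.sum_add_distrib]
    have e5 : (∑ α : Fin N, kd α v * pd u (ρ α) x) = pd u (ρ v) x := by
      simp [kd, ite_mul]
    rw [e5]
    simp [Finset.sum_const, Finset.card_univ, nsmul_eq_mul]
    ring
  rw [e4]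
  ring

end AuxLemmas

theorem statement_6
    (N : ℕ) (hN : 2 ≤ N)
    (L Lb : Fin N → Fin N → Fin N → (Fin N → ℝ) → ℝ)
    (hL : ∀ i j k, ContDiff ℝ (⊤ : ℕ∞) (L i j k))
    (hLb : ∀ i j k, ContDiff ℝ (⊤ : ℕ∞) (Lb i j k))
    (hLsym : ∀ i j k, L i j k = L i k j)
    (hLbsym : ∀ i j k, Lb i j k = Lb i k j)
    (s1 s2 s3 : ℝ)
    (ρ σ φ ρb σb φb : Fin N → (Fin N → ℝ) → ℝ)
    (F σ2 Fb σ2b : Fin N → Fin N → (Fin N → ℝ) → ℝ)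
    (hρ : ∀ j, ContDiff ℝ (⊤ : ℕ∞) (ρ j)) (hσ : ∀ j, ContDiff ℝ (⊤ : ℕ∞) (σ j))
    (hφ : ∀ j, ContDiff ℝ (⊤ : ℕ∞) (φ j))
    (hρb : ∀ j, ContDiff ℝ (⊤ : ℕ∞) (ρb j)) (hσb : ∀ j, ContDiff ℝ (⊤ : ℕ∞) (σb j))
    (hφb : ∀ j, ContDiff ℝ (⊤ : ℕ∞) (φb j))
    (hF : ∀ i j, ContDiff ℝ (⊤ : ℕ∞) (F i j)) (hσ2 : ∀ i j, ContDiff ℝ (⊤ : ℕ∞) (σ2 i j))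
    (hFb : ∀ i j, ContDiff ℝ (⊤ : ℕ∞) (Fb i j)) (hσ2b : ∀ i j, ContDiff ℝ (⊤ : ℕ∞) (σ2b i j))
    (hσ2sym : ∀ j k, σ2 j k = σ2 k j) (hσ2bsym : ∀ j k, σ2b j k = σ2b k j)
    (hmap : ∀ i j k x, Lb i j k x = L i j k x
      + omg s1 s2 s3 ρb σb Fb σ2b φb i j k x - omg s1 s2 s3 ρ σ F σ2 φ i j k x) :
    ∀ m n x,
      ((N : ℝ) + 1) * ((zeta Lb s1 s2 s3 ρb σb Fb σ2b φb m n x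
            - zeta Lb s1 s2 s3 ρb σb Fb σ2b φb n m x)
          - (zeta L s1 s2 s3 ρ σ F σ2 φ m n x - zeta L s1 s2 s3 ρ σ F σ2 φ n m x))
      = -(ricci Lb m n x - ricci Lb n m x)
        + (∑ α, Dt Lb s2 s3 σb Fb σ2b φb α α m n x)
        - (∑ α, Dt Lb s2 s3 σb Fb σ2b φb α α n m x)
        + (ricci L m n x - ricci L n m x)
        - (∑ α, Dt L s2 s3 σ F σ2 φ α α m n x)
        + (∑ α, Dt L s2 s3 σ F σ2 φ α α n m x) := by
  intro m n x
  have hzb := zeta_antisym Lb hLbsym s1 s2 s3 ρb σb φb Fb σ2b hσ2bsym m n x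
  have hz := zeta_antisym L hLsym s1 s2 s3 ρ σ φ F σ2 hσ2sym m n x
  have hRb := ricci_antisym Lb hLbsym m n x
  have hR := ricci_antisym L hLsym m n x
  have hDb := dt_trace_antisym Lb hLbsym s2 s3 σb φb Fb σ2b m n x
  have hD := dt_trace_antisym L hLsym s2 s3 σ φ F σ2 m n x
  have hTr : ∀ u v : Fin N, (∑ α, pd u (Lb α v α) x)
      = (∑ α, pd u (L α v α) x)
        + (s1 * ((N : ℝ) + 1) * pd u (ρb v) x
          + s2 * (∑ α, pd u (fun y => Fb α α y * σb v y + Fb α v y * σb α y) x)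
          + s3 * (∑ α, pd u (fun y => σ2b α v y * φb α y) x))
        - (s1 * ((N : ℝ) + 1) * pd u (ρ v) x
          + s2 * (∑ α, pd u (fun y => F α α y * σ v y + F α v y * σ α y) x)
          + s3 * (∑ α, pd u (fun y => σ2 α v y * φ α y) x)) := by
    intro u v
    have hsplit : ∀ α : Fin N, pd u (Lb α v α) x
        = pd u (L α v α) x
          + pd u (fun y => omg s1 s2 s3 ρb σb Fb σ2b φb α v α y) x
          - pd u (fun y => omg s1 s2 s3 ρ σ F σ2 φ α v α y) x := by
      intro α
      have dL : DifferentiableAt ℝ (L α v α) x :=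
        ((hL α v α).differentiable (by simp)).differentiableAt
      have dob : DifferentiableAt ℝ (fun y => omg s1 s2 s3 ρb σb Fb σ2b φb α v α y) x :=
        omg_differentiableAt s1 s2 s3 ρb σb φb Fb σ2b hρb hσb hφb hFb hσ2b α v α x
      have dou : DifferentiableAt ℝ (fun y => omg s1 s2 s3 ρ σ F σ2 φ α v α y) x :=
        omg_differentiableAt s1 s2 s3 ρ σ φ F σ2 hρ hσ hφ hF hσ2 α v α x
      rw [pd_congr (fun y => hmap α v α y) u x, pd_sub (f := fun y => L α v α y + omg s1 s2 s3 ρb σb Fb σ2b φb α v α y) u x (dL.add dob) dou,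
        pd_add u x dL dob]
    rw [Finset.sum_congr rfl fun α _ => hsplit α, Finset.sum_sub_distrib,
      Finset.sum_add_distrib,
      sum_pd_omg s1 s2 s3 ρb σb φb Fb σ2b hρb hσb hφb hFb hσ2b hσ2bsym u v x,
      sum_pd_omg s1 s2 s3 ρ σ φ F σ2 hρ hσ hφ hF hσ2 hσ2sym u v x]
  linear_combination ((N : ℝ) + 1) * hzb - ((N : ℝ) + 1) * hz + hRb - hR - hDb + hD
    + hTr m n - hTr n m

end PaperInv
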